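/- arXiv:math/0412125 — 3 statements merged into one kernel-verified Lean document; each statement's English description precedes it below -/
import Mathlib

section
/- Let f = u + ιv be a left-Class II function on an open set ω ⊆ ℍ with ω ∩ ℝ = ∅. Then at every p = t + r·ι(α,β) ∈ ω with r > 0 and sin β ≠ 0, the imaginary derivative of f equals twice its imaginary component: ι_α⁻¹·∂g/∂α + ι_β⁻¹·∂g/∂β = 2v(p), where g(t,r,α,β) = f(t + r·ι(α,β)). -/
open Quaternion

noncomputable section

/-- The quaternionic imaginary units. -/
def qI : ℍ[ℝ] := ⟨0, 1, 0, 0⟩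
def qJ : ℍ[ℝ] := ⟨0, 0, 1, 0⟩
def qK : ℍ[ℝ] := ⟨0, 0, 0, 1⟩

/-- `ι(p) = Im p / |Im p|`. -/
def iota (p : ℍ[ℝ]) : ℍ[ℝ] := (‖p.im‖)⁻¹ • p.im

/-- The left Fueter operator `∂f/∂_l p̄`. -/
def fueterL (f : ℍ[ℝ] → ℍ[ℝ]) (p : ℍ[ℝ]) : ℍ[ℝ] :=
  fderiv ℝ f p 1 + qI * fderiv ℝ f p qI + qJ * fderiv ℝ f p qJ + qK * fderiv ℝ f p qK

/-- The right Fueter operator `∂f/∂_r p̄`. -/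
def fueterR (f : ℍ[ℝ] → ℍ[ℝ]) (p : ℍ[ℝ]) : ℍ[ℝ] :=
  fderiv ℝ f p 1 + fderiv ℝ f p qI * qI + fderiv ℝ f p qJ * qJ + fderiv ℝ f p qK * qK

/-- Spherical parametrization of the imaginary unit sphere. -/
def sph (α β : ℝ) : ℍ[ℝ] :=
  ⟨0, Real.cos α * Real.sin β, Real.sin α * Real.sin β, Real.cos β⟩

/-- `∂ι/∂α`. -/
def sphA (α β : ℝ) : ℍ[ℝ] :=
  ⟨0, -(Real.sin α * Real.sin β), Real.cos α * Real.sin β, 0⟩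

/-- `∂ι/∂β`. -/
def sphB (α β : ℝ) : ℍ[ℝ] :=
  ⟨0, Real.cos α * Real.cos β, Real.sin α * Real.cos β, -Real.sin β⟩

/-- Complex Extrinsic on ω. -/
def IsCE (f : ℍ[ℝ] → ℍ[ℝ]) (ω : Set ℍ[ℝ]) : Prop := ∀ p ∈ ω, f p * p = p * f p

/-- Class I : C¹, CE and `∂f/∂t + ι ∂f/∂r = 0`. -/
def IsClassI (f : ℍ[ℝ] → ℍ[ℝ]) (ω : Set ℍ[ℝ]) : Prop :=
  ContDiffOn ℝ 1 f ω ∧ IsCE f ω ∧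
  ∀ p ∈ ω, fderiv ℝ f p 1 + iota p * fderiv ℝ f p (iota p) = 0

/-- Class II with an explicit decomposition `f = u + ι v`. -/
def IsClassIIWith (f : ℍ[ℝ] → ℍ[ℝ]) (u v : ℍ[ℝ] → ℝ) (ω : Set ℍ[ℝ]) : Prop :=
  ContDiffOn ℝ 1 f ω ∧
  (∀ p ∈ ω, f p = (u p : ℍ[ℝ]) + (v p : ℍ[ℝ]) * iota p) ∧
  ∀ p ∈ ω, fueterL f p = ((-2 * v p / ‖p.im‖ : ℝ) : ℍ[ℝ])

/-- (left-) Class II. -/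
def IsClassII (f : ℍ[ℝ] → ℍ[ℝ]) (ω : Set ℍ[ℝ]) : Prop := ∃ u v, IsClassIIWith f u v ω

/-- right-Class II with an explicit decomposition. -/
def IsClassIIRWith (f : ℍ[ℝ] → ℍ[ℝ]) (u v : ℍ[ℝ] → ℝ) (ω : Set ℍ[ℝ]) : Prop :=
  ContDiffOn ℝ 1 f ω ∧
  (∀ p ∈ ω, f p = (u p : ℍ[ℝ]) + (v p : ℍ[ℝ]) * iota p) ∧
  ∀ p ∈ ω, fueterR f p = ((-2 * v p / ‖p.im‖ : ℝ) : ℍ[ℝ])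

/-- right-Class II. -/
def IsClassIIR (f : ℍ[ℝ] → ℍ[ℝ]) (ω : Set ℍ[ℝ]) : Prop := ∃ u v, IsClassIIRWith f u v ω

/-- Complex Intrinsic : `u`, `v` depend only on `(t, r)`. -/
def IsCI (f : ℍ[ℝ] → ℍ[ℝ]) (ω : Set ℍ[ℝ]) : Prop :=
  ∃ ut vt : ℝ → ℝ → ℝ, ∀ p ∈ ω,
    f p = (ut p.re ‖p.im‖ : ℍ[ℝ]) + (vt p.re ‖p.im‖ : ℍ[ℝ]) * iota p

/-- Class III : Class I and CI. -/
def IsClassIII (f : ℍ[ℝ] → ℍ[ℝ]) (ω : Set ℍ[ℝ]) : Prop := IsClassI f ω ∧ IsCI f ω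


/-!
Differentiating the Complex Extrinsic identity `f q * q = q * f q` at `p = t + r ι` shows that
`L = r • f'(p) - v(p) • id` takes values in the centraliser `span(1, ι)` of `ι`, and the Class II
equation says exactly that `L 1 + i L i + j L j + k L k = 0`. The sum over `i, j, k` is the trace of
a bilinear form, so it may be taken over any orthonormal frame of `Im ℍ`, in particular over
`(ι, e₁, e₂)` with `e₁ = ι_α / sin β`, `e₂ = ι_β`. Then `L 1 + ι L ι` commutes with `ι` while
`e₁ L e₁ + e₂ L e₂` anticommutes with it; as they add up to zero, both vanish. Since `eₖ⁻¹ = -eₖ`,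
the imaginary derivative is `-(e₁ L e₁ + e₂ L e₂) + 2 v(p) = 2 v(p)`.
-/

open Real

theorem sum_smul_mul_map_sum_smul_of_mem_orthogonalGroup {R A n : Type*} [CommRing R]
    [Ring A] [Algebra R A] [Fintype n] [DecidableEq n] {X : Matrix n n R}
    (hX : X ∈ Matrix.orthogonalGroup n R) (b : n → A) (L : A →ₗ[R] A) :
    ∑ a, (∑ m, X a m • b m) * L (∑ m, X a m • b m) = ∑ m, b m * L (b m) := by
  have hcol : ∀ m k, ∑ a, X a m * X a k = if m = k then 1 else 0 := fun m k => by
    simpa [Matrix.mul_apply, Matrix.one_apply] using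
      congrFun (congrFun ((Matrix.mem_orthogonalGroup_iff' n R).1 hX) m) k
  simp only [map_sum, map_smul, Finset.sum_mul, Finset.mul_sum, smul_mul_smul_comm]
  rw [Finset.sum_comm]
  refine Finset.sum_congr rfl fun m _ => ?_
  rw [Finset.sum_comm]
  simp [← Finset.sum_smul, hcol]

instance : CharZero ℍ[ℝ] := charZero_of_injective_algebraMap (algebraMap ℝ ℍ[ℝ]).injective

theorem eq_zero_of_mul_eq_of_mul_eq_neg {R : Type*} [Ring R] [NoZeroDivisors R] [CharZero R]
    {a x : R} (ha : a ≠ 0) (hc : x * a = a * x) (hac : x * a = -(a * x)) : x = 0 := by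
  have h2 : (2 : R) * (a * x) = 0 := by rw [two_mul]; nth_rw 1 [← hc]; rw [hac, neg_add_cancel]
  rcases mul_eq_zero.mp h2 with h | h
  · exact absurd h two_ne_zero
  · exact (mul_eq_zero.mp h).resolve_left ha

theorem inv_mul_eq_neg_mul_of_mul_self_eq_neg_one {R : Type*} [DivisionRing R] {e : R}
    (he : e * e = -1) (x : R) : e⁻¹ * x = -(e * x) := by
  rw [inv_eq_of_mul_eq_one_right (a := e) (b := -e) (by rw [mul_neg, he, neg_neg]), neg_mul]

theorem fderiv_apply_mul_sub_mul_fderiv_apply {𝕜 A : Type*} [NontriviallyNormedField 𝕜]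
    [NormedRing A] [NormedAlgebra 𝕜 A] {f : A → A} {p : A} (hf : DifferentiableAt 𝕜 f p)
    (hc : ∀ᶠ x in nhds p, f x * x = x * f x) (w : A) :
    fderiv 𝕜 f p w * p - p * fderiv 𝕜 f p w = w * f p - f p * w := by
  have hderiv := (hf.hasFDerivAt.mul' (hasFDerivAt_id p)).sub
    ((hasFDerivAt_id p).mul' hf.hasFDerivAt)
  have hzero : HasFDerivAt (f * id - id * f) (0 : A →L[𝕜] A) p :=
    (hasFDerivAt_const 0 p).congr_of_eventuallyEq (hc.mono fun x hx => sub_eq_zero.2 hx)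
  have h := DFunLike.congr_fun (hderiv.unique hzero) w
  simp only [sub_apply, add_apply, smul_apply, ContinuousLinearMap.id_apply, zero_apply,
    MulOpposite.smul_eq_mul_unop, MulOpposite.unop_op, smul_eq_mul, id] at h
  rw [← sub_eq_zero, ← h]
  abel

theorem deriv_comp_const_add_smul {E F : Type*} [NormedAddCommGroup E] [NormedSpace ℝ E]
    [NormedAddCommGroup F] [NormedSpace ℝ F] {g : ℝ → E} {g' : E} {s : ℝ}
    (hg : HasDerivAt g g' s) {f : E → F} {f' : E →L[ℝ] F} {a : E} {r : ℝ}
    (hf : HasFDerivAt f f' (a + r • g s)) :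
    deriv (fun s => f (a + r • g s)) s = f' (r • g') :=
  (hf.comp_hasDerivAt s ((hg.const_smul r).const_add a)).deriv

theorem norm_im_smul_iota (q : ℍ[ℝ]) : ‖q.im‖ • iota q = q.im := by
  rcases eq_or_ne q.im 0 with h | h
  · simp [iota, h]
  · rw [iota, smul_smul, mul_inv_cancel₀ (norm_ne_zero_iff.2 h), one_smul]

theorem commute_iota (q : ℍ[ℝ]) : Commute (iota q) q := by
  have him : Commute q.im q := by
    nth_rw 2 [← Quaternion.re_add_im q]
    exact (Quaternion.coe_commute q.re q.im).symm.add_right (Commute.refl _)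
  exact him.smul_left _

theorem IsClassIIWith.isCE {f : ℍ[ℝ] → ℍ[ℝ]} {u v : ℍ[ℝ] → ℝ} {ω : Set ℍ[ℝ]}
    (hf : IsClassIIWith f u v ω) : IsCE f ω := fun p hp => by
  rw [hf.2.1 p hp]
  exact ((Quaternion.coe_commute _ _).add_left
    ((Quaternion.coe_commute _ _).mul_left (commute_iota p))).eq

theorem commute_smul_sub_smul_of_mul_sub_mul_eq {ι d w : ℍ[ℝ]} {t r u c : ℝ}
    (h : d * (t + r • ι) - (t + r • ι) * d = w * (u + c • ι) - (u + c • ι) * w) :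
    Commute (r • d - c • w) ι := by
  have hcomm : ∀ (a s : ℝ) (x : ℍ[ℝ]),
      x * (a + s • ι) - (a + s • ι) * x = s • (x * ι - ι * x) := fun a s x => by
    rw [mul_add, add_mul, (Quaternion.coe_commute a x).eq, mul_smul_comm, smul_mul_assoc,
      smul_sub]
    abel
  rw [hcomm, hcomm] at h
  rw [Commute, SemiconjBy, ← sub_eq_zero]
  calc (r • d - c • w) * ι - ι * (r • d - c • w)
      = r • (d * ι - ι * d) - c • (w * ι - ι * w) := by
        simp only [sub_mul, mul_sub, smul_mul_assoc, mul_smul_comm, smul_sub]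
        abel
    _ = 0 := by rw [h, sub_self]

theorem IsClassIIWith.commute_smul_fderiv_sub_smul {f : ℍ[ℝ] → ℍ[ℝ]} {u v : ℍ[ℝ] → ℝ}
    {ω : Set ℍ[ℝ]} (hf : IsClassIIWith f u v ω) (hω : IsOpen ω) {p : ℍ[ℝ]} (hp : p ∈ ω)
    (w : ℍ[ℝ]) : Commute (‖p.im‖ • fderiv ℝ f p w - v p • w) (iota p) := by
  have hdiff := (hf.1.differentiableOn one_ne_zero).differentiableAt (hω.mem_nhds hp)
  have h := fderiv_apply_mul_sub_mul_fderiv_apply hdiff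
    (Filter.eventually_of_mem (hω.mem_nhds hp) hf.isCE) w
  have hp' : p = p.re + ‖p.im‖ • iota p := by rw [norm_im_smul_iota, Quaternion.re_add_im]
  refine commute_smul_sub_smul_of_mul_sub_mul_eq (t := p.re) (u := u p) ?_
  rw [← hp', ← Quaternion.coe_mul_eq_smul, ← hf.2.1 p hp]
  exact h

def fueterLinear (L : ℍ[ℝ] →ₗ[ℝ] ℍ[ℝ]) : ℍ[ℝ] := L 1 + qI * L qI + qJ * L qJ + qK * L qK

theorem fueterL_eq_fueterLinear (f : ℍ[ℝ] → ℍ[ℝ]) (p : ℍ[ℝ]) :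
    fueterL f p = fueterLinear (fderiv ℝ f p) := rfl

theorem fueterLinear_smul_sub_smul_id (L : ℍ[ℝ] →ₗ[ℝ] ℍ[ℝ]) (r c : ℝ) :
    fueterLinear (r • L - c • LinearMap.id) = r • fueterLinear L + ((2 * c : ℝ) : ℍ[ℝ]) := by
  have hsq : qI * qI = -1 ∧ qJ * qJ = -1 ∧ qK * qK = -1 := by
    refine ⟨?_, ?_, ?_⟩ <;> ext <;>
      simp only [Quaternion.re_mul, Quaternion.imI_mul, Quaternion.imJ_mul,
        Quaternion.imK_mul] <;> simp [qI, qJ, qK]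
  simp only [fueterLinear, LinearMap.sub_apply, LinearMap.smul_apply, LinearMap.id_apply,
    mul_sub, mul_smul_comm, hsq]
  rw [← mul_one ((2 * c : ℝ) : ℍ[ℝ]), Quaternion.coe_mul_eq_smul]
  module

def sphAUnit (α : ℝ) : ℍ[ℝ] := ⟨0, -sin α, cos α, 0⟩

section SphericalFrame

variable (α β : ℝ)

theorem sphA_eq_sin_smul_sphAUnit : sphA α β = sin β • sphAUnit α := by
  ext <;> simp only [Quaternion.re_smul, Quaternion.imI_smul, Quaternion.imJ_smul,
    Quaternion.imK_smul] <;> simp [sphA, sphAUnit] <;> ring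

theorem sph_mul_self : sph α β * sph α β = -1 := by
  ext <;> simp only [Quaternion.re_mul, Quaternion.imI_mul, Quaternion.imJ_mul,
    Quaternion.imK_mul] <;> simp [sph] <;> grind [sin_sq_add_cos_sq]

theorem sphAUnit_mul_self : sphAUnit α * sphAUnit α = -1 := by
  ext <;> simp only [Quaternion.re_mul, Quaternion.imI_mul, Quaternion.imJ_mul,
    Quaternion.imK_mul] <;> simp [sphAUnit] <;> grind [sin_sq_add_cos_sq]

theorem sphB_mul_self : sphB α β * sphB α β = -1 := by
  ext <;> simp only [Quaternion.re_mul, Quaternion.imI_mul, Quaternion.imJ_mul,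
    Quaternion.imK_mul] <;> simp [sphB] <;> grind [sin_sq_add_cos_sq]

theorem sphAUnit_mul_sph : sphAUnit α * sph α β = -(sph α β * sphAUnit α) := by
  ext <;> simp only [Quaternion.re_mul, Quaternion.imI_mul, Quaternion.imJ_mul,
    Quaternion.imK_mul, Quaternion.re_neg, Quaternion.imI_neg, Quaternion.imJ_neg,
    Quaternion.imK_neg] <;> simp [sph, sphAUnit] <;> grind [sin_sq_add_cos_sq]

theorem sphB_mul_sph : sphB α β * sph α β = -(sph α β * sphB α β) := by
  ext <;> simp only [Quaternion.re_mul, Quaternion.imI_mul, Quaternion.imJ_mul,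
    Quaternion.imK_mul, Quaternion.re_neg, Quaternion.imI_neg, Quaternion.imJ_neg,
    Quaternion.imK_neg] <;> simp [sph, sphB] <;> grind [sin_sq_add_cos_sq]

theorem sph_ne_zero : sph α β ≠ 0 := fun h => by
  simpa [h] using sph_mul_self α β

theorem sph_eq : sph α β = (cos α * sin β) • qI + (sin α * sin β) • qJ + cos β • qK := by
  ext <;> simp only [Quaternion.re_add, Quaternion.imI_add, Quaternion.imJ_add,
    Quaternion.imK_add, Quaternion.re_smul, Quaternion.imI_smul, Quaternion.imJ_smul,
    Quaternion.imK_smul] <;> simp [sph, qI, qJ, qK]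

theorem sphAUnit_eq : sphAUnit α = (-sin α) • qI + cos α • qJ + (0 : ℝ) • qK := by
  ext <;> simp only [Quaternion.re_add, Quaternion.imI_add, Quaternion.imJ_add,
    Quaternion.imK_add, Quaternion.re_smul, Quaternion.imI_smul, Quaternion.imJ_smul,
    Quaternion.imK_smul] <;> simp [sphAUnit, qI, qJ, qK]

theorem sphB_eq : sphB α β = (cos α * cos β) • qI + (sin α * cos β) • qJ + (-sin β) • qK := by
  ext <;> simp only [Quaternion.re_add, Quaternion.imI_add, Quaternion.imJ_add,
    Quaternion.imK_add, Quaternion.re_smul, Quaternion.imI_smul, Quaternion.imJ_smul,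
    Quaternion.imK_smul] <;> simp [sphB, qI, qJ, qK]

def sphFrame : Matrix (Fin 3) (Fin 3) ℝ :=
  !![cos α * sin β, sin α * sin β, cos β; -sin α, cos α, 0; cos α * cos β, sin α * cos β, -sin β]

theorem sphFrame_mem_orthogonalGroup : sphFrame α β ∈ Matrix.orthogonalGroup (Fin 3) ℝ := by
  rw [Matrix.mem_orthogonalGroup_iff]
  ext i j
  fin_cases i <;> fin_cases j <;>
    simp [sphFrame, Matrix.mul_apply, Fin.sum_univ_three] <;> grind [sin_sq_add_cos_sq]

theorem sph_mul_map_add_sphAUnit_mul_map_add_sphB_mul_map (L : ℍ[ℝ] →ₗ[ℝ] ℍ[ℝ]) :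
    sph α β * L (sph α β) + sphAUnit α * L (sphAUnit α) + sphB α β * L (sphB α β)
      = qI * L qI + qJ * L qJ + qK * L qK := by
  have h := sum_smul_mul_map_sum_smul_of_mem_orthogonalGroup (sphFrame_mem_orthogonalGroup α β)
    ![qI, qJ, qK] L
  simp only [Fin.sum_univ_three, sphFrame] at h
  rw [sph_eq, sphAUnit_eq, sphB_eq]
  simpa [add_assoc] using h

theorem sphAUnit_mul_map_add_sphB_mul_map_eq_zero (L : ℍ[ℝ] →ₗ[ℝ] ℍ[ℝ])
    (hL : ∀ w, Commute (L w) (sph α β)) (htrace : fueterLinear L = 0) :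
    sphAUnit α * L (sphAUnit α) + sphB α β * L (sphB α β) = 0 := by
  set ι := sph α β
  set S := L 1 + ι * L ι
  set T := sphAUnit α * L (sphAUnit α) + sphB α β * L (sphB α β)
  have hS : Commute S ι := (hL 1).add_left ((Commute.refl ι).mul_left (hL ι))
  have hST : T = -S := by
    rw [eq_neg_iff_add_eq_zero, ← htrace, fueterLinear, add_assoc (L 1), add_assoc (L 1),
      ← sph_mul_map_add_sphAUnit_mul_map_add_sphB_mul_map α β]
    simp only [S, T, ι]
    abel
  have anticomm : ∀ e, e * ι = -(ι * e) → e * L e * ι = -(ι * (e * L e)) := fun e he => by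
    rw [mul_assoc, (hL e).eq, ← mul_assoc, he, neg_mul, mul_assoc]
  have hT : T * ι = -(ι * T) := by
    simp only [T, add_mul, mul_add, neg_add, anticomm _ (sphAUnit_mul_sph α β),
      anticomm _ (sphB_mul_sph α β)]
  refine eq_zero_of_mul_eq_of_mul_eq_neg (sph_ne_zero α β) ?_ hT
  rw [hST]
  exact hS.neg_left.eq

theorem inv_sphA_mul_add_inv_sphB_mul (hβ : sin β ≠ 0) (L : ℍ[ℝ] →ₗ[ℝ] ℍ[ℝ]) (c : ℝ)
    (hL : ∀ w, Commute (L w) (sph α β)) (htrace : fueterLinear L = 0) :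
    (sphA α β)⁻¹ * (L (sphA α β) + c • sphA α β) + (sphB α β)⁻¹ * (L (sphB α β) + c • sphB α β)
      = ((2 * c : ℝ) : ℍ[ℝ]) := by
  have hA : (sphA α β)⁻¹ * (L (sphA α β) + c • sphA α β)
      = (sphAUnit α)⁻¹ * (L (sphAUnit α) + c • sphAUnit α) := by
    rw [sphA_eq_sin_smul_sphAUnit, map_smul, smul_comm c, ← smul_add, smul_inv₀,
      smul_mul_smul_comm, inv_mul_cancel₀ hβ, one_smul]
  rw [hA, inv_mul_eq_neg_mul_of_mul_self_eq_neg_one (sphAUnit_mul_self α),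
    inv_mul_eq_neg_mul_of_mul_self_eq_neg_one (sphB_mul_self α β), mul_add, mul_add,
    mul_smul_comm, mul_smul_comm, sphAUnit_mul_self, sphB_mul_self,
    ← mul_one ((2 * c : ℝ) : ℍ[ℝ]), Quaternion.coe_mul_eq_smul]
  linear_combination (norm := module) -sphAUnit_mul_map_add_sphB_mul_map_eq_zero α β L hL htrace

theorem norm_sph : ‖sph α β‖ = 1 := by
  have h : ‖sph α β‖ * ‖sph α β‖ = 1 := by
    rw [← Quaternion.normSq_eq_norm_mul_self, Quaternion.normSq_def']
    simp only [sph]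
    grind [sin_sq_add_cos_sq]
  nlinarith [norm_nonneg (sph α β)]

theorem im_coe_add_smul_sph (t r : ℝ) : ((t : ℍ[ℝ]) + r • sph α β).im = r • sph α β := by
  rw [Quaternion.im_add, Quaternion.im_coe, zero_add, Quaternion.im_smul]
  rfl

theorem norm_im_coe_add_smul_sph (t : ℝ) {r : ℝ} (hr : 0 ≤ r) :
    ‖((t : ℍ[ℝ]) + r • sph α β).im‖ = r := by
  rw [im_coe_add_smul_sph, norm_smul, norm_sph, mul_one, Real.norm_of_nonneg hr]

theorem iota_coe_add_smul_sph (t : ℝ) {r : ℝ} (hr : 0 < r) :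
    iota ((t : ℍ[ℝ]) + r • sph α β) = sph α β := by
  rw [iota, norm_im_coe_add_smul_sph α β t hr.le, im_coe_add_smul_sph, inv_smul_smul₀ hr.ne']

theorem hasDerivAt_sph_fst : HasDerivAt (fun s => sph s β) (sphA α β) α := by
  simp_rw [sph_eq]
  refine ((((hasDerivAt_cos α).mul_const (sin β)).smul_const qI).add
    (((hasDerivAt_sin α).mul_const (sin β)).smul_const qJ)).add_const (cos β • qK)
    |>.congr_deriv ?_
  ext <;> simp only [Quaternion.re_add, Quaternion.imI_add, Quaternion.imJ_add,
    Quaternion.imK_add, Quaternion.re_smul, Quaternion.imI_smul, Quaternion.imJ_smul,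
    Quaternion.imK_smul] <;> simp [sphA, qI, qJ]

theorem hasDerivAt_sph_snd : HasDerivAt (fun s => sph α s) (sphB α β) β := by
  simp_rw [sph_eq]
  refine ((((hasDerivAt_sin β).const_mul (cos α)).smul_const qI).add
    (((hasDerivAt_sin β).const_mul (sin α)).smul_const qJ)).add
    ((hasDerivAt_cos β).smul_const qK) |>.congr_deriv ?_
  ext <;> simp only [Quaternion.re_add, Quaternion.imI_add, Quaternion.imJ_add,
    Quaternion.imK_add, Quaternion.re_smul, Quaternion.imI_smul, Quaternion.imJ_smul,
    Quaternion.imK_smul] <;> simp [sphB, qI, qJ, qK]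

end SphericalFrame

theorem stmt17_general (ω : Set ℍ[ℝ]) (hω : IsOpen ω)
    (f : ℍ[ℝ] → ℍ[ℝ]) (u v : ℍ[ℝ] → ℝ) (hf : IsClassIIWith f u v ω)
    (t r α β : ℝ) (hr : 0 < r) (hβ : Real.sin β ≠ 0)
    (hp : (t : ℍ[ℝ]) + r • sph α β ∈ ω) :
    (sphA α β)⁻¹ * deriv (fun s : ℝ => f ((t : ℍ[ℝ]) + r • sph s β)) α
      + (sphB α β)⁻¹ * deriv (fun s : ℝ => f ((t : ℍ[ℝ]) + r • sph α s)) β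
    = ((2 * v ((t : ℍ[ℝ]) + r • sph α β) : ℝ) : ℍ[ℝ]) := by
  set p := (t : ℍ[ℝ]) + r • sph α β
  have hnorm : ‖p.im‖ = r := norm_im_coe_add_smul_sph α β t hr.le
  have hD : HasFDerivAt f (fderiv ℝ f p) p :=
    ((hf.1.differentiableOn one_ne_zero).differentiableAt (hω.mem_nhds hp)).hasFDerivAt
  set L : ℍ[ℝ] →ₗ[ℝ] ℍ[ℝ] := r • (fderiv ℝ f p : ℍ[ℝ] →ₗ[ℝ] ℍ[ℝ]) - v p • LinearMap.id
  have hL : ∀ w, Commute (L w) (sph α β) := fun w => by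
    have h := hf.commute_smul_fderiv_sub_smul hω hp w
    rwa [hnorm, iota_coe_add_smul_sph α β t hr] at h
  have htrace : fueterLinear L = 0 := by
    rw [fueterLinear_smul_sub_smul_id, ← fueterL_eq_fueterLinear, hf.2.2 p hp, hnorm,
      ← Quaternion.coe_smul, ← Quaternion.coe_add, smul_eq_mul, mul_div_cancel₀ _ hr.ne']
    simp
  have hDr : ∀ w, fderiv ℝ f p (r • w) = L w + v p • w := fun w => by simp [L]
  rw [deriv_comp_const_add_smul (hasDerivAt_sph_fst α β) hD,
    deriv_comp_const_add_smul (hasDerivAt_sph_snd α β) hD, hDr, hDr]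
  exact inv_sphA_mul_add_inv_sphB_mul α β hβ L (v p) hL htrace

/-- the imaginary derivative of a left-Class II function equals
twice its imaginary component. -/
theorem stmt17 (ω : Set ℍ[ℝ]) (hω : IsOpen ω) (hIm : ∀ p ∈ ω, p.im ≠ 0)
    (f : ℍ[ℝ] → ℍ[ℝ]) (u v : ℍ[ℝ] → ℝ) (hf : IsClassIIWith f u v ω)
    (t r α β : ℝ) (hr : 0 < r) (hβ : Real.sin β ≠ 0)
    (hp : (t : ℍ[ℝ]) + r • sph α β ∈ ω) :
    (sphA α β)⁻¹ * deriv (fun s : ℝ => f ((t : ℍ[ℝ]) + r • sph s β)) α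
      + (sphB α β)⁻¹ * deriv (fun s : ℝ => f ((t : ℍ[ℝ]) + r • sph α s)) β
    = ((2 * v ((t : ℍ[ℝ]) + r • sph α β) : ℝ) : ℍ[ℝ]) :=
  stmt17_general ω hω f u v hf t r α β hr hβ hp

end
end

section
/- Let f be a C² left-Class II function on an open set ω ⊆ ℍ with ω ∩ ℝ = ∅. Then the chiral difference ∂f/∂_l p̄ − ∂f/∂_r p̄ is left Fueter-regular on ω, i.e. ∂/∂_l p̄ (∂f/∂_l p̄ − ∂f/∂_r p̄) = 0 on ω. -/
open Quaternion

noncomputable section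

/-! Since `f` is left-Class II, `∂f/∂_l p̄` is real-valued on `ω`, so its differential takes real
values, which commute with `i, j, k`: left and right Fueter operators agree on it. On the other
hand `∂/∂_l p̄ ∘ ∂/∂_r p̄ = ∂/∂_r p̄ ∘ ∂/∂_l p̄` on C² functions, by symmetry of the second
derivative. Hence `∂/∂_l p̄ (∂f/∂_l p̄ - ∂f/∂_r p̄) = ∂/∂_r p̄ ∂f/∂_l p̄ - ∂/∂_r p̄ ∂f/∂_l p̄ = 0`. -/

open Filter Topology

theorem Finset.sum_mul_sum_comm_of_symm {R ι : Type*} [Semiring R] [Fintype ι] (e : ι → R)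
    (T : ι → ι → R) (hT : ∀ a b, T a b = T b a) :
    ∑ a, e a * ∑ b, T a b * e b = ∑ a, (∑ b, e b * T a b) * e a := by
  simp only [Finset.mul_sum, Finset.sum_mul, ← mul_assoc]
  rw [Finset.sum_comm]
  simp only [hT]

def fueterBasis : Fin 4 → ℍ[ℝ] := ![1, qI, qJ, qK]

def fueterLCLM : (ℍ[ℝ] →L[ℝ] ℍ[ℝ]) →L[ℝ] ℍ[ℝ] :=
  ∑ a, (ContinuousLinearMap.mul ℝ ℍ[ℝ] (fueterBasis a)).comp
    (ContinuousLinearMap.apply ℝ ℍ[ℝ] (fueterBasis a))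

def fueterRCLM : (ℍ[ℝ] →L[ℝ] ℍ[ℝ]) →L[ℝ] ℍ[ℝ] :=
  ∑ a, ((ContinuousLinearMap.mul ℝ ℍ[ℝ]).flip (fueterBasis a)).comp
    (ContinuousLinearMap.apply ℝ ℍ[ℝ] (fueterBasis a))

theorem fueterLCLM_apply (A : ℍ[ℝ] →L[ℝ] ℍ[ℝ]) :
    fueterLCLM A = ∑ a, fueterBasis a * A (fueterBasis a) := by
  simp [fueterLCLM]

theorem fueterRCLM_apply (A : ℍ[ℝ] →L[ℝ] ℍ[ℝ]) :
    fueterRCLM A = ∑ a, A (fueterBasis a) * fueterBasis a := by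
  simp [fueterRCLM]

theorem fueterL_eq_fueterLCLM (f : ℍ[ℝ] → ℍ[ℝ]) (p : ℍ[ℝ]) :
    fueterL f p = fueterLCLM (fderiv ℝ f p) := by
  simp [fueterLCLM_apply, Fin.sum_univ_four, fueterBasis, fueterL]

theorem fueterR_eq_fueterRCLM (f : ℍ[ℝ] → ℍ[ℝ]) (p : ℍ[ℝ]) :
    fueterR f p = fueterRCLM (fderiv ℝ f p) := by
  simp [fueterRCLM_apply, Fin.sum_univ_four, fueterBasis, fueterR]

variable {f : ℍ[ℝ] → ℍ[ℝ]} {p : ℍ[ℝ]}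

theorem hasFDerivAt_fueterL (hf : DifferentiableAt ℝ (fderiv ℝ f) p) :
    HasFDerivAt (fueterL f) (fueterLCLM.comp (fderiv ℝ (fderiv ℝ f) p)) p := by
  rw [show fueterL f = fueterLCLM ∘ fderiv ℝ f from funext (fueterL_eq_fueterLCLM f)]
  exact HasFDerivAt.comp (𝕜 := ℝ) (F := ℍ[ℝ] →L[ℝ] ℍ[ℝ]) p fueterLCLM.hasFDerivAt hf.hasFDerivAt

theorem hasFDerivAt_fueterR (hf : DifferentiableAt ℝ (fderiv ℝ f) p) :
    HasFDerivAt (fueterR f) (fueterRCLM.comp (fderiv ℝ (fderiv ℝ f) p)) p := by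
  rw [show fueterR f = fueterRCLM ∘ fderiv ℝ f from funext (fueterR_eq_fueterRCLM f)]
  exact HasFDerivAt.comp (𝕜 := ℝ) (F := ℍ[ℝ] →L[ℝ] ℍ[ℝ]) p fueterRCLM.hasFDerivAt hf.hasFDerivAt

theorem fueterL_fueterR_comm (hf : ContDiffAt ℝ 2 f p) :
    fueterL (fueterR f) p = fueterR (fueterL f) p := by
  have hdf : DifferentiableAt ℝ (fderiv ℝ f) p :=
    (hf.fderiv_right le_rfl).differentiableAt one_ne_zero
  have hsymm := hf.isSymmSndFDerivAt (by simp)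
  rw [fueterL_eq_fueterLCLM, fueterR_eq_fueterRCLM, (hasFDerivAt_fueterL hdf).fderiv,
    (hasFDerivAt_fueterR hdf).fderiv]
  simp only [fueterLCLM_apply, fueterRCLM_apply, ContinuousLinearMap.comp_apply]
  exact Finset.sum_mul_sum_comm_of_symm _ _ fun a b => hsymm _ _

theorem fderiv_apply_eq_coe_of_eventuallyEq_coe {g : ℍ[ℝ] → ℍ[ℝ]} {φ : ℍ[ℝ] → ℝ}
    (hg : DifferentiableAt ℝ g p) (hgφ : g =ᶠ[𝓝 p] fun q => (φ q : ℍ[ℝ])) (w : ℍ[ℝ]) :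
    fderiv ℝ g p w = (fderiv ℝ φ p w : ℍ[ℝ]) := by
  have hφ : DifferentiableAt ℝ φ p := by
    have hre : (fun q => (g q).re) =ᶠ[𝓝 p] φ := hgφ.mono fun q hq => by simp [hq]
    let reCLM : ℍ[ℝ] →L[ℝ] ℝ :=
      (show ℍ[ℝ] →ₗ[ℝ] ℝ from QuaternionAlgebra.reₗ _ _ _).toContinuousLinearMap
    exact (reCLM.differentiableAt.comp p hg).congr_of_eventuallyEq hre.symm
  have hcoe : (fun q => (φ q : ℍ[ℝ])) = fun q => φ q • (1 : ℍ[ℝ]) := by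
    funext q
    rw [← coe_mul_eq_smul, mul_one]
  rw [hgφ.fderiv_eq, hcoe, (hφ.hasFDerivAt.smul_const 1).fderiv,
    ContinuousLinearMap.smulRight_apply, ← coe_mul_eq_smul, mul_one]

theorem fueterL_eq_fueterR_of_eventuallyEq_coe {g : ℍ[ℝ] → ℍ[ℝ]} {φ : ℍ[ℝ] → ℝ}
    (hg : DifferentiableAt ℝ g p) (hgφ : g =ᶠ[𝓝 p] fun q => (φ q : ℍ[ℝ])) :
    fueterL g p = fueterR g p := by
  simp only [fueterL_eq_fueterLCLM, fueterR_eq_fueterRCLM, fueterLCLM_apply, fueterRCLM_apply,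
    fderiv_apply_eq_coe_of_eventuallyEq_coe hg hgφ, coe_commutes]

theorem fueterL_sub {g h : ℍ[ℝ] → ℍ[ℝ]} (hg : DifferentiableAt ℝ g p)
    (hh : DifferentiableAt ℝ h p) :
    fueterL (fun q => g q - h q) p = fueterL g p - fueterL h p := by
  simp only [fueterL_eq_fueterLCLM]
  rw [fderiv_fun_sub hg hh, map_sub]

theorem stmt18_general (ω : Set ℍ[ℝ]) (hω : IsOpen ω)
    (f : ℍ[ℝ] → ℍ[ℝ]) (hf2 : ContDiffOn ℝ 2 f ω) (hf : IsClassII f ω) :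
    ∀ p ∈ ω, fueterL (fun q => fueterL f q - fueterR f q) p = 0 := by
  intro p hp
  obtain ⟨-, v, -, -, hfueterL⟩ := hf
  have hf2p : ContDiffAt ℝ 2 f p := hf2.contDiffAt (hω.mem_nhds hp)
  have hdf : DifferentiableAt ℝ (fderiv ℝ f) p :=
    (hf2p.fderiv_right le_rfl).differentiableAt one_ne_zero
  have hreal : fueterL f =ᶠ[𝓝 p] fun q => ((-2 * v q / ‖q.im‖ : ℝ) : ℍ[ℝ]) :=
    eventually_of_mem (hω.mem_nhds hp) hfueterL
  rw [fueterL_sub (hasFDerivAt_fueterL hdf).differentiableAt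
      (hasFDerivAt_fueterR hdf).differentiableAt,
    fueterL_eq_fueterR_of_eventuallyEq_coe (hasFDerivAt_fueterL hdf).differentiableAt hreal,
    fueterL_fueterR_comm hf2p, sub_self]

/-- the chiral difference of a C² left-Class II function is left
Fueter-regular. -/
theorem stmt18 (ω : Set ℍ[ℝ]) (hω : IsOpen ω) (hIm : ∀ p ∈ ω, p.im ≠ 0)
    (f : ℍ[ℝ] → ℍ[ℝ]) (hf2 : ContDiffOn ℝ 2 f ω) (hf : IsClassII f ω) :
    ∀ p ∈ ω, fueterL (fun q => fueterL f q - fueterR f q) p = 0 :=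
  stmt18_general ω hω f hf2 hf

end
end

section
/- (Mirror operator) Let c₁, c₂ ∈ ℝ with c₂ > 0, let 0 ≤ s < S, let A = {(t,r) : r > 0, s < √((t−c₁)² + (r−c₂)²) < S} be an annulus contained in the upper half plane, let V be a connected open set of spherical parameters (α,β) with sin β ≠ 0, and let W = {t + r·ι(α,β) : (t,r) ∈ A, (α,β) ∈ V} ⊆ ℍ. If f is a left-Class II function on W, then the function M(f)(p) = conj(f(conj(p))) is a right-Class II function on the conjugated set W̄ = {conj(p) : p ∈ W}. -/
/-!
Conjugation is a real-linear involution that reverses products, so the differential of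
`M(f) = conj ∘ f ∘ conj` at `p` is `h ↦ conj (df(p̄)(h̄))`. Since `conj e = -e` for `e = i, j, k`,
conjugating `e · df(p̄)(e)` gives `dM(f)(p)(e) · e`, so the right Fueter operator of `M(f)` at `p`
is the conjugate of the left Fueter operator of `f` at `p̄`, a real number. The decomposition
`u + ι v` is carried over unchanged, because `conj (ι(p̄)) = ι(p)` and `|Im p̄| = |Im p|`.
-/

open Quaternion

noncomputable section

section Mirror

variable {𝕜 : Type*} [NontriviallyNormedField 𝕜] [StarRing 𝕜] [TrivialStar 𝕜]
  {E : Type*} [NormedAddCommGroup E] [NormedSpace 𝕜 E] [StarAddMonoid E] [StarModule 𝕜 E]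
  [ContinuousStar E]
  {F : Type*} [NormedAddCommGroup F] [NormedSpace 𝕜 F] [StarAddMonoid F] [StarModule 𝕜 F]
  [ContinuousStar F]

theorem fderiv_star_comp_star_apply (f : E → F) (p h : E) :
    fderiv 𝕜 (fun q => star (f (star q))) p h = star (fderiv 𝕜 f (star p) (star h)) := by
  have hcomp : (fun q => star (f (star q))) = fun q => star ((f ∘ starL' 𝕜) q) := rfl
  rw [hcomp, fderiv_star, (starL' 𝕜).comp_right_fderiv]
  rfl

theorem ContDiffOn.star_comp_star {f : E → F} {n : WithTop ℕ∞} {s : Set E}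
    (hf : ContDiffOn 𝕜 n f s) :
    ContDiffOn 𝕜 n (fun q => star (f (star q))) (star ⁻¹' s) :=
  (starL' 𝕜 : F ≃L[𝕜] F).contDiff.comp_contDiffOn
    (hf.comp (starL' 𝕜 : E ≃L[𝕜] E).contDiff.contDiffOn fun _ hq => hq)

end Mirror

instance {R : Type*} [CommRing R] [StarRing R] [TrivialStar R] : StarModule R ℍ[R] :=
  ⟨fun r a => by rw [Quaternion.star_smul, star_trivial r]⟩

theorem star_iota (p : ℍ[ℝ]) : star (iota p) = -iota p := by
  rw [Quaternion.star_eq_neg]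
  simp [iota]

theorem iota_star (p : ℍ[ℝ]) : iota (star p) = -iota p := by
  rw [iota, Quaternion.im_star, norm_neg, smul_neg, iota]

theorem star_qI : star qI = -qI := Quaternion.star_eq_neg.2 rfl

theorem star_qJ : star qJ = -qJ := Quaternion.star_eq_neg.2 rfl

theorem star_qK : star qK = -qK := Quaternion.star_eq_neg.2 rfl

theorem fueterR_star_comp_star (f : ℍ[ℝ] → ℍ[ℝ]) (p : ℍ[ℝ]) :
    fueterR (fun q => star (f (star q))) p = star (fueterL f (star p)) := by
  simp only [fueterR, fueterL, fderiv_star_comp_star_apply, star_add, star_mul, star_one,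
    star_qI, star_qJ, star_qK, map_neg, star_neg, mul_neg, neg_mul]

theorem IsClassIIWith.star_comp_star {f : ℍ[ℝ] → ℍ[ℝ]} {u v : ℍ[ℝ] → ℝ} {ω : Set ℍ[ℝ]}
    (hf : IsClassIIWith f u v ω) :
    IsClassIIRWith (fun p => star (f (star p))) (fun p => u (star p)) (fun p => v (star p))
      (star ⁻¹' ω) := by
  obtain ⟨hC, hdec, hfueter⟩ := hf
  refine ⟨hC.star_comp_star, fun p hp => ?_, fun p hp => ?_⟩
  · dsimp only
    rw [hdec _ hp, star_add, star_mul, Quaternion.star_coe, Quaternion.star_coe, iota_star,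
      star_neg, star_iota, neg_neg, ← Quaternion.coe_commutes]
  · rw [fueterR_star_comp_star, hfueter _ hp, Quaternion.star_coe, Quaternion.im_star, norm_neg]

theorem stmt19_general (W : Set ℍ[ℝ])
    (f : ℍ[ℝ] → ℍ[ℝ]) (hf : IsClassII f W) :
    IsClassIIR (fun p => star (f (star p))) (star '' W) := by
  obtain ⟨u, v, hf⟩ := hf
  rw [Set.image_star]
  exact ⟨_, _, hf.star_comp_star⟩

/-- Mirror operator: if `f` is left-Class II on the tube `W`
over an annulus in the upper half plane, then `M(f)(p) = conj (f (conj p))` is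
right-Class II on the conjugated set `W̄`. -/
theorem stmt19 (c₁ c₂ s S : ℝ) (hc₂ : 0 < c₂) (hs : 0 ≤ s) (hsS : s < S)
    (V : Set (ℝ × ℝ)) (hVopen : IsOpen V) (hVconn : IsConnected V)
    (hVβ : ∀ q ∈ V, Real.sin q.2 ≠ 0)
    (W : Set ℍ[ℝ])
    (hW : W = {p : ℍ[ℝ] | ∃ t r α β : ℝ,
      (0 < r ∧ s < Real.sqrt ((t - c₁) ^ 2 + (r - c₂) ^ 2) ∧
        Real.sqrt ((t - c₁) ^ 2 + (r - c₂) ^ 2) < S) ∧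
      (α, β) ∈ V ∧ p = (t : ℍ[ℝ]) + r • sph α β})
    (f : ℍ[ℝ] → ℍ[ℝ]) (hf : IsClassII f W) :
    IsClassIIR (fun p => star (f (star p))) (star '' W) :=
  stmt19_general W f hf

end
end
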